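/- arXiv:2411.07880 — 2 statements merged into one kernel-verified Lean document; each statement's English description precedes it below -/
import Mathlib

section
/- Let $f(x) = x^3 + \alpha x + \beta \in \mathbb{Q}_3[x]$ be an irreducible depressed cubic that generates a totally ramified extension of $\mathbb{Q}_3$. Then $v_3(\alpha) > \frac{2}{3} v_3(\beta)$ (where $v_3(0) = \infty$). -/
open Polynomial

section Aux

variable {L : Type} [Field L] {v : L → ℚ}

section
variable (hmul : ∀ x y : L, x ≠ 0 → y ≠ 0 → v (x * y) = v x + v y)
  (hadd : ∀ x y : L, x ≠ 0 → y ≠ 0 → x + y ≠ 0 → min (v x) (v y) ≤ v (x + y))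

include hmul

lemma aux_v_one : v 1 = 0 := by
  have h := hmul 1 1 one_ne_zero one_ne_zero
  rw [one_mul] at h; linarith

lemma aux_v_neg (x : L) (hx : x ≠ 0) : v (-x) = v x := by
  have h1 : v ((-1 : L) * (-1)) = v (-1) + v (-1) :=
    hmul (-1) (-1) (by norm_num) (by norm_num)
  rw [show ((-1 : L) * (-1)) = 1 by ring, aux_v_one hmul] at h1
  have h2 : v (-1 : L) = 0 := by linarith
  have h3 := hmul (-1) x (by norm_num) hx
  rw [h2] at h3
  rw [show -x = (-1 : L) * x by ring, h3]; ring

include hadd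

lemma aux_v_add_lt {x y : L} (hx : x ≠ 0) (hy : y ≠ 0) (h : v x < v y) :
    x + y ≠ 0 ∧ v (x + y) = v x := by
  have hne : x + y ≠ 0 := by
    intro h0
    have hyx : y = -x := by linear_combination h0
    rw [hyx, aux_v_neg hmul x hx] at h
    exact lt_irrefl _ h
  refine ⟨hne, le_antisymm ?_ ?_⟩
  · have h2 := hadd (x + y) (-y) hne (neg_ne_zero.2 hy)
      (by rw [show x + y + -y = x by ring]; exact hx)
    rw [show x + y + -y = x by ring, aux_v_neg hmul y hy] at h2
    by_contra h4
    push_neg at h4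
    have : v x < min (v (x + y)) (v y) := lt_min h4 h
    linarith
  · have h5 := hadd x y hx hy hne
    rwa [min_eq_left h.le] at h5

lemma aux_tri_ne {x y : L} (hx : x ≠ 0) (h : y = 0 ∨ v x ≠ v y) : x + y ≠ 0 := by
  rcases h with h | h
  · simpa [h] using hx
  · intro h0
    have hyx : y = -x := by linear_combination h0
    rw [hyx, aux_v_neg hmul x hx] at h
    exact h rfl

lemma aux_tri {x y : L} (hxy : x + y ≠ 0) (h : x = 0 ∨ y = 0 ∨ v x ≠ v y) :
    v (x + y) = v x ∨ v (x + y) = v y := by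
  rcases eq_or_ne x 0 with hx | hx
  · right; rw [hx, zero_add]
  rcases eq_or_ne y 0 with hy | hy
  · left; rw [hy, add_zero]
  have hne : v x ≠ v y := by tauto
  rcases lt_or_gt_of_ne hne with hlt | hlt
  · exact Or.inl (aux_v_add_lt hmul hadd hx hy hlt).2
  · right
    rw [show x + y = y + x by ring]
    exact (aux_v_add_lt hmul hadd hy hx hlt).2

lemma aux_min_twice {x y z : L} (hx : x ≠ 0) (hy : y ≠ 0) (hz : z ≠ 0)
    (h : x + y + z = 0) :
    (v x = v y ∧ v x ≤ v z) ∨ (v x = v z ∧ v x ≤ v y) ∨ (v y = v z ∧ v y ≤ v x) := by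
  by_cases h1 : v x = v y
  · left
    refine ⟨h1, ?_⟩
    have hxy : x + y ≠ 0 := by intro h0; rw [h0, zero_add] at h; exact hz h
    have hz' : z = -(x + y) := by linear_combination h
    have := hadd x y hx hy hxy
    rw [hz', aux_v_neg hmul _ hxy]
    calc v x = min (v x) (v y) := by rw [h1, min_self]
    _ ≤ v (x + y) := this
  by_cases h2 : v x = v z
  · right; left
    refine ⟨h2, ?_⟩
    have hxz : x + z ≠ 0 := by intro h0; rw [show x + y + z = y + (x+z) by ring, h0, add_zero] at h; exact hy h
    have hy' : y = -(x + z) := by linear_combination h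
    have := hadd x z hx hz hxz
    rw [hy', aux_v_neg hmul _ hxz]
    calc v x = min (v x) (v z) := by rw [h2, min_self]
    _ ≤ v (x + z) := this
  by_cases h3 : v y = v z
  · right; right
    refine ⟨h3, ?_⟩
    have hyz : y + z ≠ 0 := by intro h0; rw [show x + y + z = x + (y+z) by ring, h0, add_zero] at h; exact hx h
    have hx' : x = -(y + z) := by linear_combination h
    have := hadd y z hy hz hyz
    rw [hx', aux_v_neg hmul _ hyz]
    calc v y = min (v y) (v z) := by rw [h3, min_self]
    _ ≤ v (y + z) := this
  exfalso
  have hxy : x + y ≠ 0 := aux_tri_ne hmul hadd (x := x) hx (Or.inr h1)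
  have hvz : v z = v (x + y) := by
    have hz' : z = -(x + y) := by linear_combination h
    rw [hz', aux_v_neg hmul _ hxy]
  rcases aux_tri hmul hadd hxy (Or.inr (Or.inr h1)) with hc | hc
  · exact h2 (hvz.trans hc).symm
  · exact h3 (hvz.trans hc).symm

lemma aux_four {A0 A1 A2 A3 : L} (h0 : A0 ≠ 0) (h1 : A1 ≠ 0) (h2 : A2 ≠ 0) (h3 : A3 ≠ 0)
    (hsum : A0 + A1 + A2 + A3 = 0)
    (d01 : v A0 ≠ v A1) (d02 : v A0 ≠ v A2) (d12 : v A1 ≠ v A2)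
    (d13 : v A1 ≠ v A3) (d23 : v A2 ≠ v A3) : v A3 ≤ v A1 := by
  by_contra hlt0
  rw [not_le] at hlt0
  have hlt : v A1 < v A3 := hlt0
  set u := A0 + A3 with hu
  by_cases hu0 : u = 0
  · have h12 : A1 + A2 = 0 := by rw [hu] at hu0; linear_combination hsum - hu0
    have : A1 = -A2 := by linear_combination h12
    rw [this, aux_v_neg hmul _ h2] at d12
    exact d12 rfl
  have hsum3 : u + A1 + A2 = 0 := by rw [hu]; linear_combination hsum
  have hmt := aux_min_twice hmul hadd hu0 h1 h2 hsum3
  rcases lt_or_gt_of_ne d01 with hc | hc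
  · -- v A0 < v A1 < v A3, so v u = v A0
    have hvu : v u = v A0 := (aux_v_add_lt hmul hadd h0 h3 (hc.trans hlt)).2
    rcases hmt with ⟨e, _⟩ | ⟨e, _⟩ | ⟨e, _⟩
    · exact d01 (hvu.symm.trans e)
    · exact d02 (hvu.symm.trans e)
    · exact d12 e
  · -- v A1 < v A0 and v A1 < v A3, so v u > v A1
    have hmin : v A1 < min (v A0) (v A3) := lt_min hc hlt
    have hvu : v A1 < v u := lt_of_lt_of_le hmin (hadd A0 A3 h0 h3 hu0)
    rcases hmt with ⟨e, _⟩ | ⟨e, he⟩ | ⟨e, _⟩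
    · exact absurd e.symm (ne_of_lt hvu)
    · linarith [hvu, he]
    · exact d12 e

end
end Aux

set_option maxHeartbeats 1000000 in
/-- If an irreducible depressed cubic `x³ + αx + β` over `ℚ₃` generates a totally
ramified extension, then `v₃(α) > (2/3)v₃(β)` (with `v₃(0) = ∞`). -/
theorem stmt_10 (α β : ℚ_[3])
    (hirr : Irreducible (X ^ 3 + C α * X + C β : Polynomial ℚ_[3]))
    (L : Type) [Field L] [Algebra ℚ_[3] L]
    (θ : L) (hroot : Polynomial.aeval θ (X ^ 3 + C α * X + C β : Polynomial ℚ_[3]) = 0)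
    (hgen : IntermediateField.adjoin ℚ_[3] {θ} = ⊤)
    (v : L → ℚ)
    (hmul : ∀ x y : L, x ≠ 0 → y ≠ 0 → v (x * y) = v x + v y)
    (hadd : ∀ x y : L, x ≠ 0 → y ≠ 0 → x + y ≠ 0 → min (v x) (v y) ≤ v (x + y))
    (hext : ∀ x : ℚ_[3], x ≠ 0 → v (algebraMap ℚ_[3] L x) = (x.valuation : ℚ))
    (htot : ∃ x : L, x ≠ 0 ∧ v x = 1 / 3) :
    α = 0 ∨ (2 / 3 : ℚ) * (β.valuation : ℚ) < (α.valuation : ℚ) := by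
  rcases eq_or_ne α 0 with hα | hα
  · exact Or.inl hα
  right
  -- Basic polynomial facts
  set f : Polynomial ℚ_[3] := X ^ 3 + C α * X + C β with hf
  have hdeg : f.natDegree = 3 := by rw [hf]; compute_degree!
  have hdegd : f.degree = 3 := by rw [hf]; compute_degree!
  have hmonic : f.Monic := by rw [hf]; monicity!
  have noroot : ∀ c : ℚ_[3], c ^ 3 + α * c + β ≠ 0 := by
    intro c hc
    have hroot' : f.IsRoot c := by
      rw [hf]; simp only [IsRoot, eval_add, eval_mul, eval_pow, eval_X, eval_C]
      linear_combination hc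
    obtain ⟨g, hg⟩ := dvd_iff_isRoot.mpr hroot'
    rcases hirr.isUnit_or_isUnit hg with hu | hu
    · exact (Polynomial.not_isUnit_X_sub_C c) hu
    · have hdg := Polynomial.degree_eq_zero_of_isUnit hu
      have h3 := hdegd
      rw [hg, degree_mul, degree_X_sub_C, hdg] at h3
      norm_num at h3
  have hβ : β ≠ 0 := by intro h; exact noroot 0 (by simp [h])
  have galg : ∀ c : ℚ_[3], c ≠ 0 → algebraMap ℚ_[3] L c ≠ 0 := by
    intro c hc
    simpa [_root_.map_eq_zero] using hc
  have heq : θ ^ 3 + algebraMap ℚ_[3] L α * θ + algebraMap ℚ_[3] L β = 0 := by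
    have h := hroot
    rw [hf] at h
    simpa only [map_add, map_mul, map_pow, aeval_X, aeval_C] using h
  have θnz : θ ≠ 0 := by
    intro h
    rw [h] at heq
    simp only [ne_eq, zero_pow, mul_zero, add_zero, zero_add, OfNat.ofNat_ne_zero,
      not_false_eq_true] at heq
    exact galg β hβ heq
  have hnotin : ∀ c : ℚ_[3], θ ≠ algebraMap ℚ_[3] L c := by
    intro c hc
    apply noroot c
    have h := heq
    rw [hc] at h
    have h2 : algebraMap ℚ_[3] L (c ^ 3 + α * c + β) = 0 := by
      rw [map_add, map_add, map_mul, map_pow]; exact h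
    exact (_root_.map_eq_zero _).mp h2
  -- rank
  have hmin : minpoly ℚ_[3] θ = f := (minpoly.eq_of_irreducible_of_monic hirr hroot hmonic).symm
  have hint : IsIntegral ℚ_[3] θ := ⟨f, hmonic, by rwa [← aeval_def]⟩
  have hrank : Module.finrank ℚ_[3] L = 3 := by
    have h1 := IntermediateField.adjoin.finrank hint
    rw [hmin, hdeg, hgen, IntermediateField.finrank_top'] at h1
    exact h1
  -- the uniformizer
  obtain ⟨π, hπ0, hπv⟩ := htot
  have hπ2nz : π ^ 2 ≠ 0 := pow_ne_zero _ hπ0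
  have hvπ2 : v (π ^ 2) = 2 / 3 := by
    rw [sq, hmul π π hπ0 hπ0, hπv]; norm_num
  -- integer-arithmetic helpers
  have hne01 : ∀ m n : ℤ, (m : ℚ) ≠ (n : ℚ) + 1 / 3 := by
    intro m n h
    have h3 : (3 * m : ℚ) = 3 * n + 1 := by push_cast; linarith
    have h4 : (3 * m : ℤ) = 3 * n + 1 := by exact_mod_cast h3
    omega
  have hne02 : ∀ m n : ℤ, (m : ℚ) ≠ (n : ℚ) + 2 / 3 := by
    intro m n h
    have h3 : (3 * m : ℚ) = 3 * n + 2 := by push_cast; linarith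
    have h4 : (3 * m : ℤ) = 3 * n + 2 := by exact_mod_cast h3
    omega
  have hne12 : ∀ m n : ℤ, (m : ℚ) + 1 / 3 ≠ (n : ℚ) + 2 / 3 := by
    intro m n h
    exact hne01 m n (by linarith)
  -- term-value lemmas
  have hT1 : ∀ c : ℚ_[3], c ≠ 0 → algebraMap ℚ_[3] L c * π ≠ 0 ∧
      v (algebraMap ℚ_[3] L c * π) = (c.valuation : ℚ) + 1 / 3 := by
    intro c hc
    refine ⟨mul_ne_zero (galg c hc) hπ0, ?_⟩
    rw [hmul _ _ (galg c hc) hπ0, hext c hc, hπv]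
  have hT2 : ∀ c : ℚ_[3], c ≠ 0 → algebraMap ℚ_[3] L c * π ^ 2 ≠ 0 ∧
      v (algebraMap ℚ_[3] L c * π ^ 2) = (c.valuation : ℚ) + 2 / 3 := by
    intro c hc
    refine ⟨mul_ne_zero (galg c hc) hπ2nz, ?_⟩
    rw [hmul _ _ (galg c hc) hπ2nz, hext c hc, hvπ2]
  -- CORE
  have core : ∀ c₀ c₁ c₂ : ℚ_[3], ¬(c₀ = 0 ∧ c₁ = 0 ∧ c₂ = 0) →
      (algebraMap ℚ_[3] L c₀ + algebraMap ℚ_[3] L c₁ * π + algebraMap ℚ_[3] L c₂ * π ^ 2 ≠ 0 ∧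
       ((c₀ ≠ 0 ∧ v (algebraMap ℚ_[3] L c₀ + algebraMap ℚ_[3] L c₁ * π +
            algebraMap ℚ_[3] L c₂ * π ^ 2) = (c₀.valuation : ℚ)) ∨
        (c₁ ≠ 0 ∧ v (algebraMap ℚ_[3] L c₀ + algebraMap ℚ_[3] L c₁ * π +
            algebraMap ℚ_[3] L c₂ * π ^ 2) = (c₁.valuation : ℚ) + 1 / 3) ∨
        (c₂ ≠ 0 ∧ v (algebraMap ℚ_[3] L c₀ + algebraMap ℚ_[3] L c₁ * π +
            algebraMap ℚ_[3] L c₂ * π ^ 2) = (c₂.valuation : ℚ) + 2 / 3))) := by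
    intro c₀ c₁ c₂ h
    by_cases hc1 : c₁ = 0 <;> by_cases hc2 : c₂ = 0
    · -- only c₀
      have hc0 : c₀ ≠ 0 := by tauto
      subst hc1; subst hc2
      simp only [map_zero, zero_mul, add_zero]
      exact ⟨galg c₀ hc0, Or.inl ⟨hc0, hext c₀ hc0⟩⟩
    · -- c₁ = 0, c₂ ≠ 0
      subst hc1
      simp only [map_zero, zero_mul, add_zero, zero_add]
      obtain ⟨hT2nz, hT2v⟩ := hT2 c₂ hc2
      by_cases hc0 : c₀ = 0
      · subst hc0
        simp only [map_zero, zero_add]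
        exact ⟨hT2nz, Or.inr (Or.inr ⟨hc2, hT2v⟩)⟩
      · have hd : v (algebraMap ℚ_[3] L c₀) ≠ v (algebraMap ℚ_[3] L c₂ * π ^ 2) := by
          rw [hext c₀ hc0, hT2v]; exact hne02 _ _
        have hnz := aux_tri_ne hmul hadd (galg c₀ hc0) (Or.inr hd)
        refine ⟨hnz, ?_⟩
        rcases aux_tri hmul hadd hnz (Or.inr (Or.inr hd)) with hv | hv
        · exact Or.inl ⟨hc0, by rw [hv, hext c₀ hc0]⟩
        · exact Or.inr (Or.inr ⟨hc2, by rw [hv, hT2v]⟩)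
    · -- c₁ ≠ 0, c₂ = 0
      subst hc2
      simp only [map_zero, zero_mul, add_zero]
      obtain ⟨hT1nz, hT1v⟩ := hT1 c₁ hc1
      by_cases hc0 : c₀ = 0
      · subst hc0
        simp only [map_zero, zero_add]
        exact ⟨hT1nz, Or.inr (Or.inl ⟨hc1, hT1v⟩)⟩
      · have hd : v (algebraMap ℚ_[3] L c₀) ≠ v (algebraMap ℚ_[3] L c₁ * π) := by
          rw [hext c₀ hc0, hT1v]; exact hne01 _ _
        have hnz := aux_tri_ne hmul hadd (galg c₀ hc0) (Or.inr hd)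
        refine ⟨hnz, ?_⟩
        rcases aux_tri hmul hadd hnz (Or.inr (Or.inr hd)) with hv | hv
        · exact Or.inl ⟨hc0, by rw [hv, hext c₀ hc0]⟩
        · exact Or.inr (Or.inl ⟨hc1, by rw [hv, hT1v]⟩)
    · -- c₁ ≠ 0, c₂ ≠ 0
      obtain ⟨hT1nz, hT1v⟩ := hT1 c₁ hc1
      obtain ⟨hT2nz, hT2v⟩ := hT2 c₂ hc2
      have hd12 : v (algebraMap ℚ_[3] L c₁ * π) ≠ v (algebraMap ℚ_[3] L c₂ * π ^ 2) := by
        rw [hT1v, hT2v]; exact hne12 _ _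
      have hWnz := aux_tri_ne hmul hadd hT1nz (Or.inr hd12)
      have hWv := aux_tri hmul hadd hWnz (Or.inr (Or.inr hd12))
      by_cases hc0 : c₀ = 0
      · subst hc0
        simp only [map_zero, zero_add]
        refine ⟨hWnz, ?_⟩
        rcases hWv with hv | hv
        · exact Or.inr (Or.inl ⟨hc1, by rw [hv, hT1v]⟩)
        · exact Or.inr (Or.inr ⟨hc2, by rw [hv, hT2v]⟩)
      · simp only [add_assoc]
        rcases hWv with hv | hv
        · have hd : v (algebraMap ℚ_[3] L c₀) ≠
              v (algebraMap ℚ_[3] L c₁ * π + algebraMap ℚ_[3] L c₂ * π ^ 2) := by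
            rw [hext c₀ hc0, hv, hT1v]; exact hne01 _ _
          have hnz := aux_tri_ne hmul hadd (galg c₀ hc0) (Or.inr hd)
          refine ⟨hnz, ?_⟩
          rcases aux_tri hmul hadd hnz (Or.inr (Or.inr hd)) with hv2 | hv2
          · exact Or.inl ⟨hc0, by rw [hv2, hext c₀ hc0]⟩
          · exact Or.inr (Or.inl ⟨hc1, by rw [hv2, hv, hT1v]⟩)
        · have hd : v (algebraMap ℚ_[3] L c₀) ≠
              v (algebraMap ℚ_[3] L c₁ * π + algebraMap ℚ_[3] L c₂ * π ^ 2) := by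
            rw [hext c₀ hc0, hv, hT2v]; exact hne02 _ _
          have hnz := aux_tri_ne hmul hadd (galg c₀ hc0) (Or.inr hd)
          refine ⟨hnz, ?_⟩
          rcases aux_tri hmul hadd hnz (Or.inr (Or.inr hd)) with hv2 | hv2
          · exact Or.inl ⟨hc0, by rw [hv2, hext c₀ hc0]⟩
          · exact Or.inr (Or.inr ⟨hc2, by rw [hv2, hv, hT2v]⟩)
  -- spanning
  have hspan : ∀ x : L, ∃ c₀ c₁ c₂ : ℚ_[3],
      x = algebraMap ℚ_[3] L c₀ + algebraMap ℚ_[3] L c₁ * π + algebraMap ℚ_[3] L c₂ * π ^ 2 := by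
    have hli : LinearIndependent ℚ_[3] ![(1 : L), π, π ^ 2] := by
      rw [Fintype.linearIndependent_iff]
      intro g hg
      have hform : algebraMap ℚ_[3] L (g 0) + algebraMap ℚ_[3] L (g 1) * π +
          algebraMap ℚ_[3] L (g 2) * π ^ 2 = 0 := by
        rw [Fin.sum_univ_three] at hg
        simpa only [Matrix.cons_val_zero, Matrix.cons_val_one, Matrix.head_cons,
          Matrix.cons_val_two, Matrix.tail_cons, Algebra.smul_def, mul_one] using hg
      have hall : g 0 = 0 ∧ g 1 = 0 ∧ g 2 = 0 := by
        by_contra hh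
        exact (core _ _ _ hh).1 hform
      intro i; fin_cases i
      · exact hall.1
      · exact hall.2.1
      · exact hall.2.2
    have hsp : Submodule.span ℚ_[3] (Set.range ![(1 : L), π, π ^ 2]) = ⊤ :=
      hli.span_eq_top_of_card_eq_finrank (by simp [hrank])
    intro x
    have hx : x ∈ Submodule.span ℚ_[3] (Set.range ![(1 : L), π, π ^ 2]) := by
      rw [hsp]; trivial
    rw [Submodule.mem_span_range_iff_exists_fun] at hx
    obtain ⟨c, hc⟩ := hx
    refine ⟨c 0, c 1, c 2, ?_⟩
    rw [Fin.sum_univ_three] at hc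
    rw [← hc]
    simp only [Matrix.cons_val_zero, Matrix.cons_val_one, Matrix.head_cons,
      Matrix.cons_val_two, Matrix.tail_cons, Algebra.smul_def, mul_one]
  -- every value is in (1/3)ℤ
  have val3 : ∀ x : L, x ≠ 0 → ∃ k : ℤ, 3 * v x = (k : ℚ) := by
    intro x hx
    obtain ⟨c₀, c₁, c₂, hxe⟩ := hspan x
    have hcs : ¬(c₀ = 0 ∧ c₁ = 0 ∧ c₂ = 0) := by
      rintro ⟨rfl, rfl, rfl⟩
      simp only [map_zero, zero_mul, add_zero, zero_add] at hxe
      exact hx hxe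
    rcases (core c₀ c₁ c₂ hcs).2 with ⟨_, hv⟩ | ⟨_, hv⟩ | ⟨_, hv⟩
    · exact ⟨3 * c₀.valuation, by rw [hxe, hv]; push_cast; ring⟩
    · exact ⟨3 * c₁.valuation + 1, by rw [hxe, hv]; push_cast; ring⟩
    · exact ⟨3 * c₂.valuation + 2, by rw [hxe, hv]; push_cast; ring⟩
  -- splitting off the integer-valued part
  have split : ∀ x : L, x ≠ 0 → (∃ m : ℤ, v x = (m : ℚ)) →
      ∃ c : ℚ_[3], c ≠ 0 ∧ (c.valuation : ℚ) = v x ∧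
        (x = algebraMap ℚ_[3] L c ∨
          (x - algebraMap ℚ_[3] L c ≠ 0 ∧ v x < v (x - algebraMap ℚ_[3] L c) ∧
            ¬∃ j : ℤ, v (x - algebraMap ℚ_[3] L c) = (j : ℚ))) := by
    intro x hx hm
    obtain ⟨m, hm⟩ := hm
    obtain ⟨c₀, c₁, c₂, hxe⟩ := hspan x
    by_cases hy0 : c₁ = 0 ∧ c₂ = 0
    · obtain ⟨rfl, rfl⟩ := hy0
      simp only [map_zero, zero_mul, add_zero] at hxe
      have hc0 : c₀ ≠ 0 := by rintro rfl; rw [map_zero] at hxe; exact hx hxe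
      exact ⟨c₀, hc0, by rw [hxe, hext c₀ hc0], Or.inl hxe⟩
    · -- W := the non-integral part
      have hcs : ¬((0 : ℚ_[3]) = 0 ∧ c₁ = 0 ∧ c₂ = 0) := by tauto
      have hW := core 0 c₁ c₂ hcs
      rw [map_zero, zero_add] at hW
      obtain ⟨hWnz, hWv⟩ := hW
      have hWv' : v (algebraMap ℚ_[3] L c₁ * π + algebraMap ℚ_[3] L c₂ * π ^ 2) =
          (c₁.valuation : ℚ) + 1 / 3 ∨
          v (algebraMap ℚ_[3] L c₁ * π + algebraMap ℚ_[3] L c₂ * π ^ 2) =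
          (c₂.valuation : ℚ) + 2 / 3 := by
        rcases hWv with ⟨h0, _⟩ | ⟨_, hv⟩ | ⟨_, hv⟩
        · exact absurd rfl h0
        · exact Or.inl hv
        · exact Or.inr hv
      have hWnotint : ¬∃ j : ℤ, v (algebraMap ℚ_[3] L c₁ * π +
          algebraMap ℚ_[3] L c₂ * π ^ 2) = (j : ℚ) := by
        rintro ⟨j, hj⟩
        rcases hWv' with hv | hv
        · exact hne01 j c₁.valuation (by rw [← hj, hv])
        · exact hne02 j c₂.valuation (by rw [← hj, hv])
      rw [add_assoc] at hxe
      by_cases hc0 : c₀ = 0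
      · exfalso
        rw [hc0, map_zero, zero_add] at hxe
        exact hWnotint ⟨m, by rw [← hxe, hm]⟩
      · have hd : v (algebraMap ℚ_[3] L c₀) ≠
            v (algebraMap ℚ_[3] L c₁ * π + algebraMap ℚ_[3] L c₂ * π ^ 2) := by
          intro he
          exact hWnotint ⟨c₀.valuation, by rw [← he, hext c₀ hc0]⟩
        have hxv : v x = v (algebraMap ℚ_[3] L c₀) := by
          rcases aux_tri hmul hadd (hxe ▸ hx) (Or.inr (Or.inr hd)) with hv | hv
          · rw [hxe]; exact hv
          · exfalso; exact hWnotint ⟨m, by rw [← hv, ← hxe, hm]⟩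
        have hlt : v (algebraMap ℚ_[3] L c₀) <
            v (algebraMap ℚ_[3] L c₁ * π + algebraMap ℚ_[3] L c₂ * π ^ 2) := by
          rcases lt_or_gt_of_ne hd with h | h
          · exact h
          · exfalso
            have := (aux_v_add_lt hmul hadd hWnz (galg c₀ hc0) h).2
            rw [show algebraMap ℚ_[3] L c₁ * π + algebraMap ℚ_[3] L c₂ * π ^ 2 +
              algebraMap ℚ_[3] L c₀ = algebraMap ℚ_[3] L c₀ +
              (algebraMap ℚ_[3] L c₁ * π + algebraMap ℚ_[3] L c₂ * π ^ 2) by ring, ← hxe] at this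
            exact hWnotint ⟨m, by rw [← this, hm]⟩
        refine ⟨c₀, hc0, by rw [hxv, hext c₀ hc0], Or.inr ⟨?_, ?_, ?_⟩⟩
        · rw [hxe]
          intro h0
          apply hWnz
          linear_combination h0
        · rw [show x - algebraMap ℚ_[3] L c₀ =
            algebraMap ℚ_[3] L c₁ * π + algebraMap ℚ_[3] L c₂ * π ^ 2 by
              rw [hxe]; ring, hxv]
          exact hlt
        · rw [show x - algebraMap ℚ_[3] L c₀ =
            algebraMap ℚ_[3] L c₁ * π + algebraMap ℚ_[3] L c₂ * π ^ 2 by rw [hxe]; ring]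
          exact hWnotint
  -- valuation of 3
  have hval3q : (3 : ℚ_[3]).valuation = 1 := by
    have h := @Padic.valuation_p 3 _
    rwa [Nat.cast_ofNat] at h
  have h3nz : (3 : ℚ_[3]) ≠ 0 := by norm_num
  have hv3L : v (algebraMap ℚ_[3] L 3) = 1 := by
    rw [hext 3 h3nz, hval3q]; norm_num
  -- the key lemma
  have key : ∀ m : ℤ, v θ = (m : ℚ) → (α.valuation : ℚ) ≠ 1 + 2 * v θ →
      ∃ s : ℚ, v θ < s ∧ 2 * s ≤ min (1 + 2 * v θ) ((α.valuation : ℚ)) := by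
    intro m hm hA
    obtain ⟨c, hc0, hcv, hsplit⟩ := split θ θnz ⟨m, hm⟩
    rcases hsplit with he | ⟨hθ'nz, hslt, hnint⟩
    · exact absurd he (hnotin c)
    set θ' := θ - algebraMap ℚ_[3] L c with hθ'def
    obtain ⟨k, hk⟩ := val3 θ' hθ'nz
    have hγc : v (algebraMap ℚ_[3] L c) = (m : ℚ) := by rw [hext c hc0, hcv, hm]
    have h32nz : (3 : ℚ_[3]) * c ^ 2 ≠ 0 := mul_ne_zero h3nz (pow_ne_zero _ hc0)
    have hv3c2 : v (algebraMap ℚ_[3] L (3 * c ^ 2)) = 1 + 2 * (m : ℚ) := by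
      rw [show (3 : ℚ_[3]) * c ^ 2 = 3 * (c * c) by ring, map_mul, map_mul,
        hmul _ _ (galg 3 h3nz) (mul_ne_zero (galg c hc0) (galg c hc0)),
        hmul _ _ (galg c hc0) (galg c hc0), hv3L, hγc]
      ring
    have h3c2 : (3 : ℚ_[3]) * c ^ 2 + α ≠ 0 := by
      intro h
      apply hA
      have hα' : α = -(3 * c ^ 2) := by linear_combination h
      calc (α.valuation : ℚ) = v (algebraMap ℚ_[3] L α) := (hext α hα).symm
        _ = v (-(algebraMap ℚ_[3] L (3 * c ^ 2))) := by rw [hα', map_neg]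
        _ = v (algebraMap ℚ_[3] L (3 * c ^ 2)) := aux_v_neg hmul _ (galg _ h32nz)
        _ = 1 + 2 * (m : ℚ) := hv3c2
        _ = 1 + 2 * v θ := by rw [hm]
    have hw0 : algebraMap ℚ_[3] L (3 * c ^ 2 + α) ≠ 0 := galg _ h3c2
    have hAv : v (algebraMap ℚ_[3] L α) = (α.valuation : ℚ) := hext α hα
    have hAne : (1 : ℚ) + 2 * m ≠ (α.valuation : ℚ) := by
      intro h; exact hA (by rw [hm, ← h])
    have hvw : v (algebraMap ℚ_[3] L (3 * c ^ 2 + α)) =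
        min (1 + 2 * (m : ℚ)) ((α.valuation : ℚ)) := by
      rw [map_add]
      rcases lt_or_gt_of_ne hAne with h | h
      · rw [min_eq_left h.le,
          (aux_v_add_lt hmul hadd (galg _ h32nz) (galg α hα) (by rw [hv3c2, hAv]; exact h)).2]
        exact hv3c2
      · rw [min_eq_right h.le, show algebraMap ℚ_[3] L (3 * c ^ 2) + algebraMap ℚ_[3] L α =
            algebraMap ℚ_[3] L α + algebraMap ℚ_[3] L (3 * c ^ 2) by ring,
          (aux_v_add_lt hmul hadd (galg α hα) (galg _ h32nz) (by rw [hv3c2, hAv]; exact h)).2]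
        exact hAv
    obtain ⟨nz, hnzv⟩ : ∃ nz : ℤ, min (1 + 2 * (m : ℚ)) ((α.valuation : ℚ)) = (nz : ℚ) := by
      rcases le_total (1 + 2 * (m : ℚ)) ((α.valuation : ℚ)) with h | h
      · exact ⟨1 + 2 * m, by rw [min_eq_left h]; push_cast; ring⟩
      · exact ⟨α.valuation, by rw [min_eq_right h]⟩
    -- the four terms
    have hA0nz : algebraMap ℚ_[3] L (c ^ 3 + α * c + β) ≠ 0 := galg _ (noroot c)
    have hvA0 : v (algebraMap ℚ_[3] L (c ^ 3 + α * c + β)) =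
        (((c ^ 3 + α * c + β).valuation : ℤ) : ℚ) := hext _ (noroot c)
    have hA1nz : algebraMap ℚ_[3] L (3 * c ^ 2 + α) * θ' ≠ 0 := mul_ne_zero hw0 hθ'nz
    have hvA1 : v (algebraMap ℚ_[3] L (3 * c ^ 2 + α) * θ') = (nz : ℚ) + v θ' := by
      rw [hmul _ _ hw0 hθ'nz, hvw, hnzv]
    have h3cnz : (3 : ℚ_[3]) * c ≠ 0 := mul_ne_zero h3nz hc0
    have hA2nz : algebraMap ℚ_[3] L (3 * c) * θ' ^ 2 ≠ 0 :=
      mul_ne_zero (galg _ h3cnz) (pow_ne_zero _ hθ'nz)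
    have hvθ'2 : v (θ' ^ 2) = 2 * v θ' := by rw [sq, hmul _ _ hθ'nz hθ'nz]; ring
    have hvA2 : v (algebraMap ℚ_[3] L (3 * c) * θ' ^ 2) = 1 + (m : ℚ) + 2 * v θ' := by
      rw [hmul _ _ (galg _ h3cnz) (pow_ne_zero _ hθ'nz), map_mul,
        hmul _ _ (galg 3 h3nz) (galg c hc0), hv3L, hγc, hvθ'2]
    have hA3nz : θ' ^ 3 ≠ 0 := pow_ne_zero _ hθ'nz
    have hvA3 : v (θ' ^ 3) = (k : ℚ) := by
      rw [show θ' ^ 3 = θ' ^ 2 * θ' by ring, hmul _ _ (pow_ne_zero _ hθ'nz) hθ'nz, hvθ'2]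
      linarith [hk]
    have hsum : algebraMap ℚ_[3] L (c ^ 3 + α * c + β) +
        algebraMap ℚ_[3] L (3 * c ^ 2 + α) * θ' +
        algebraMap ℚ_[3] L (3 * c) * θ' ^ 2 + θ' ^ 3 = 0 := by
      have hθeq : θ = algebraMap ℚ_[3] L c + θ' := by rw [hθ'def]; ring
      have h := heq
      rw [hθeq] at h
      simp only [map_add, map_mul, map_pow, map_ofNat]
      linear_combination h
    -- distinctness of values
    set M0 : ℤ := (c ^ 3 + α * c + β).valuation with hM0
    have d01 : v (algebraMap ℚ_[3] L (c ^ 3 + α * c + β)) ≠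
        v (algebraMap ℚ_[3] L (3 * c ^ 2 + α) * θ') := by
      rw [hvA0, hvA1]
      intro h
      exact hnint ⟨M0 - nz, by push_cast; linarith⟩
    have d02 : v (algebraMap ℚ_[3] L (c ^ 3 + α * c + β)) ≠
        v (algebraMap ℚ_[3] L (3 * c) * θ' ^ 2) := by
      rw [hvA0, hvA2]
      intro h
      exact hnint ⟨k - M0 + 1 + m, by push_cast; linarith [hk]⟩
    have d12 : v (algebraMap ℚ_[3] L (3 * c ^ 2 + α) * θ') ≠
        v (algebraMap ℚ_[3] L (3 * c) * θ' ^ 2) := by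
      rw [hvA1, hvA2]
      intro h
      exact hnint ⟨nz - 1 - m, by push_cast; linarith⟩
    have d13 : v (algebraMap ℚ_[3] L (3 * c ^ 2 + α) * θ') ≠ v (θ' ^ 3) := by
      rw [hvA1, hvA3]
      intro h
      exact hnint ⟨k - nz, by push_cast; linarith⟩
    have d23 : v (algebraMap ℚ_[3] L (3 * c) * θ' ^ 2) ≠ v (θ' ^ 3) := by
      rw [hvA2, hvA3]
      intro h
      exact hnint ⟨1 + m, by push_cast; linarith [hk]⟩
    have hfour := aux_four hmul hadd hA0nz hA1nz hA2nz hA3nz hsum d01 d02 d12 d13 d23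
    rw [hvA3, hvA1] at hfour
    refine ⟨v θ', hslt, ?_⟩
    rw [hm, hnzv]
    linarith [hk]
  -- the three-term balance for θ itself
  obtain ⟨kθ, hkθ⟩ := val3 θ θnz
  have hx3nz : θ ^ 3 ≠ 0 := pow_ne_zero _ θnz
  have hynz : algebraMap ℚ_[3] L α * θ ≠ 0 := mul_ne_zero (galg α hα) θnz
  have hznz : algebraMap ℚ_[3] L β ≠ 0 := galg β hβ
  have hvx3 : v (θ ^ 3) = 3 * v θ := by
    rw [show θ ^ 3 = θ * θ * θ by ring, hmul _ _ (mul_ne_zero θnz θnz) θnz,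
      hmul _ _ θnz θnz]
    ring
  have hvy : v (algebraMap ℚ_[3] L α * θ) = (α.valuation : ℚ) + v θ := by
    rw [hmul _ _ (galg α hα) θnz, hext α hα]
  have hvz : v (algebraMap ℚ_[3] L β) = (β.valuation : ℚ) := hext β hβ
  rcases aux_min_twice hmul hadd hx3nz hynz hznz heq with ⟨e, le⟩ | ⟨e, le⟩ | ⟨e, le⟩
  · -- 3t = A + t ≤ B : always contradictory
    exfalso
    rw [hvx3, hvy] at e
    rw [hvx3, hvz] at le
    have ht : v θ = ((kθ - α.valuation : ℤ) : ℚ) := by push_cast; linarith [hkθ]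
    have hAne : (α.valuation : ℚ) ≠ 1 + 2 * v θ := by intro h; linarith
    obtain ⟨s, hs1, hs2⟩ := key _ ht hAne
    have := min_le_right (1 + 2 * v θ) ((α.valuation : ℚ))
    linarith
  · -- 3t = B ≤ A + t
    rw [hvx3, hvz] at e
    rw [hvx3, hvy] at le
    by_contra hcon
    push_neg at hcon
    have hA2t : (α.valuation : ℚ) = 2 * v θ := by linarith
    have ht : v θ = ((kθ - α.valuation : ℤ) : ℚ) := by push_cast; linarith [hkθ]
    have hAne : (α.valuation : ℚ) ≠ 1 + 2 * v θ := by intro h; linarith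
    obtain ⟨s, hs1, hs2⟩ := key _ ht hAne
    have := min_le_right (1 + 2 * v θ) ((α.valuation : ℚ))
    linarith
  · -- A + t = B ≤ 3t : always contradictory
    exfalso
    rw [hvy, hvz] at e
    rw [hvy, hvx3] at le
    have ht : v θ = ((β.valuation - α.valuation : ℤ) : ℚ) := by push_cast; linarith
    have hAne : (α.valuation : ℚ) ≠ 1 + 2 * v θ := by intro h; linarith
    obtain ⟨s, hs1, hs2⟩ := key _ ht hAne
    have := min_le_right (1 + 2 * v θ) ((α.valuation : ℚ))
    linarith
end

section
/- Let $f(x) = x^3 + \alpha x + \beta \in \mathbb{Q}_3[x]$ be an irreducible depressed cubic whose discriminant $\Delta = -4\alpha^3 - 27\beta^2$ is a square in $\mathbb{Q}_3$ and which generates a totally ramified extension. If $v_3(\beta) \equiv 0 \pmod 3$, then $v_3(\alpha) = \frac{2}{3}v_3(\beta) + 1$. -/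
/-!
Write `a = v₃(α)`, `b = v₃(β) = 3k` and `f = X³ + αX + β`, which has no root in `ℚ₃`.
If `α = 0` or `3a > 2b + 3`, the discriminant has the odd valuation `2b + 3`, so it is not a
square. If `3a < 2b`, Hensel's lemma lifts the approximate root `-β/α`. If `3a = 2b`, a root `θ`
has `v θ = k`; as `L` is totally ramified of degree 3, `1, x, x²` (with `v x = 1/3`) is a basis
whose summands have valuations in distinct cosets of `ℤ`, so `θ = e + m` with `e ∈ ℚ₃` and
`v e = k < v m`. Then `v (f e) > 3k`, hence `v (f e) ≥ 3k + 1`, and Hensel's lemma lifts `e`.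
Finally `3a = 2b + 1` and `3a = 2b + 2` are impossible since `3 ∣ b`.
-/

structure IsAddVal {K : Type*} [Field K] (v : K → ℚ) : Prop where
  map_mul : ∀ x y : K, x ≠ 0 → y ≠ 0 → v (x * y) = v x + v y
  min_le_map_add : ∀ x y : K, x ≠ 0 → y ≠ 0 → x + y ≠ 0 → min (v x) (v y) ≤ v (x + y)

namespace IsAddVal

variable {K : Type*} [Field K] {v : K → ℚ} (hv : IsAddVal v)
include hv

theorem map_one : v 1 = 0 := by
  simpa using hv.map_mul 1 1 one_ne_zero one_ne_zero

theorem map_neg {x : K} (hx : x ≠ 0) : v (-x) = v x := by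
  have h := hv.map_mul (-1) (-1) (by norm_num) (by norm_num)
  rw [neg_one_mul, neg_neg, hv.map_one] at h
  rw [← neg_one_mul, hv.map_mul _ _ (by norm_num) hx]
  linarith

theorem map_pow {x : K} (hx : x ≠ 0) (n : ℕ) : v (x ^ n) = n * v x := by
  induction n with
  | zero => simp [hv.map_one]
  | succ n ih =>
    rw [pow_succ, hv.map_mul _ _ (pow_ne_zero n hx) hx, ih]
    push_cast
    ring

theorem map_add_of_lt {x y : K} (hx : x ≠ 0) (h : y ≠ 0 → v x < v y) :
    x + y ≠ 0 ∧ v (x + y) = v x := by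
  rcases eq_or_ne y 0 with rfl | hy
  · simpa using hx
  have hlt := h hy
  have hxy : x + y ≠ 0 := fun h0 => by
    rw [eq_neg_of_add_eq_zero_right h0, hv.map_neg hx] at hlt
    exact hlt.false
  refine ⟨hxy, le_antisymm ?_ ?_⟩
  · have := hv.min_le_map_add (x + y) (-y) hxy (neg_ne_zero.2 hy) (by simpa using hx)
    rw [add_neg_cancel_right, hv.map_neg hy] at this
    exact (min_le_iff.1 this).resolve_right hlt.not_ge
  · simpa [hlt.le] using hv.min_le_map_add x y hx hy hxy

theorem map_add_of_ne {x y : K} (hx : x ≠ 0) (hy : y ≠ 0) (h : v x ≠ v y) :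
    x + y ≠ 0 ∧ v (x + y) = min (v x) (v y) := by
  rcases h.lt_or_gt with h | h
  · simpa [h.le] using hv.map_add_of_lt hx fun _ => h
  · simpa [add_comm x, h.le] using hv.map_add_of_lt hy fun _ => h

theorem lt_map_add {q : ℚ} {x y : K} (hx : x ≠ 0 → q < v x) (hy : y ≠ 0 → q < v y)
    (hxy : x + y ≠ 0) : q < v (x + y) := by
  rcases eq_or_ne x 0 with rfl | hx0
  · simpa using hy (by simpa using hxy)
  rcases eq_or_ne y 0 with rfl | hy0
  · simpa using hx hx0
  exact (lt_min (hx hx0) (hy hy0)).trans_le (hv.min_le_map_add x y hx0 hy0 hxy)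

theorem add_add_ne_zero_of_lt {a b c : K} (ha : a ≠ 0) (hb : b ≠ 0 → v a < v b)
    (hc : c ≠ 0 → v a < v c) : a + b + c ≠ 0 := by
  rw [add_assoc]
  exact (hv.map_add_of_lt ha (hv.lt_map_add hb hc)).1

theorem map_eq_of_cubic_eq_zero {A B θ : K} {κ : ℚ} (hA : A ≠ 0) (hB : B ≠ 0)
    (hAv : 2 * κ ≤ v A) (hBv : v B = 3 * κ) (hθ : θ ^ 3 + A * θ + B = 0) : v θ = κ := by
  have hθ0 : θ ≠ 0 := by rintro rfl; simp [hB] at hθ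
  have hθ3 := hv.map_pow hθ0 3
  have hAθ := hv.map_mul A θ hA hθ0
  push_cast at hθ3
  rcases lt_trichotomy (v θ) κ with h | h | h
  · refine absurd hθ (hv.add_add_ne_zero_of_lt (pow_ne_zero 3 hθ0) (fun _ => ?_) fun _ => ?_) <;>
      linarith
  · exact h
  · refine absurd (by linear_combination hθ)
      (hv.add_add_ne_zero_of_lt hB (fun _ => ?_) fun _ => ?_ : B + θ ^ 3 + A * θ ≠ 0) <;>
      linarith

theorem lt_map_cubic_of_lt_map_sub {A B θ r : K} {κ : ℚ} (hθ : θ ^ 3 + A * θ + B = 0)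
    (hθv : v θ = κ) (hAv : v A = 2 * κ) (h3 : 0 ≤ v 3) (hr : κ < v (θ - r))
    (hf : r ^ 3 + A * r + B ≠ 0) : 3 * κ < v (r ^ 3 + A * r + B) := by
  set m := θ - r
  have key : r ^ 3 + A * r + B = -(3 * θ ^ 2 * m) + -(A * m) + 3 * θ * m ^ 2 + -m ^ 3 := by
    linear_combination hθ
  have ht₁ : -(3 * θ ^ 2 * m) ≠ 0 → 3 * κ < v (-(3 * θ ^ 2 * m)) := fun h => by
    obtain ⟨h3θ, hm⟩ := mul_ne_zero_iff.1 (neg_ne_zero.1 h)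
    obtain ⟨h3ne, hθ⟩ := mul_ne_zero_iff.1 h3θ
    rw [hv.map_neg (neg_ne_zero.1 h), hv.map_mul _ _ h3θ hm, hv.map_mul _ _ h3ne hθ,
      hv.map_pow (pow_ne_zero_iff two_ne_zero |>.1 hθ), hθv]
    push_cast
    linarith
  have ht₂ : -(A * m) ≠ 0 → 3 * κ < v (-(A * m)) := fun h => by
    obtain ⟨hA, hm⟩ := mul_ne_zero_iff.1 (neg_ne_zero.1 h)
    rw [hv.map_neg (neg_ne_zero.1 h), hv.map_mul _ _ hA hm, hAv]
    linarith
  have ht₃ : 3 * θ * m ^ 2 ≠ 0 → 3 * κ < v (3 * θ * m ^ 2) := fun h => by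
    obtain ⟨h3θ, hm⟩ := mul_ne_zero_iff.1 h
    obtain ⟨h3ne, hθ⟩ := mul_ne_zero_iff.1 h3θ
    rw [hv.map_mul _ _ h3θ hm, hv.map_mul _ _ h3ne hθ,
      hv.map_pow (pow_ne_zero_iff two_ne_zero |>.1 hm), hθv]
    push_cast
    linarith
  have ht₄ : -m ^ 3 ≠ 0 → 3 * κ < v (-m ^ 3) := fun h => by
    have hm : m ≠ 0 := pow_ne_zero_iff three_ne_zero |>.1 (neg_ne_zero.1 h)
    rw [hv.map_neg (neg_ne_zero.1 h), hv.map_pow hm]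
    push_cast
    linarith
  rw [key] at hf ⊢
  exact hv.lt_map_add (hv.lt_map_add (hv.lt_map_add ht₁ ht₂) ht₃) ht₄ hf

end IsAddVal

namespace Padic

variable {p : ℕ} [Fact p.Prime]

theorem isAddVal_valuation : IsAddVal fun x : ℚ_[p] => (x.valuation : ℚ) where
  map_mul x y hx hy := by simp [valuation_mul hx hy]
  min_le_map_add x y _ _ hxy := by exact_mod_cast le_valuation_add hxy

theorem valuation_neg (x : ℚ_[p]) : (-x).valuation = x.valuation := by
  rcases eq_or_ne x 0 with rfl | hx
  · simp
  · exact_mod_cast isAddVal_valuation.map_neg hx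

theorem valuation_add_of_lt {x y : ℚ_[p]} (hx : x ≠ 0)
    (h : y ≠ 0 → x.valuation < y.valuation) :
    x + y ≠ 0 ∧ (x + y).valuation = x.valuation := by
  have := isAddVal_valuation.map_add_of_lt hx fun hy => (by exact_mod_cast h hy)
  exact ⟨this.1, by exact_mod_cast this.2⟩

theorem norm_lt_one_of_valuation_pos {x : ℚ_[p]} (h : 0 < x.valuation) : ‖x‖ < 1 := by
  rcases eq_or_ne x 0 with rfl | hx
  · simp
  rw [norm_eq_zpow_neg_valuation hx]
  exact zpow_lt_one_of_neg₀ (by exact_mod_cast (Fact.out : p.Prime).one_lt) (by omega)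

theorem valuation_le_of_sq_eq_discr {α β d : ℚ_[3]} (hβ : β ≠ 0)
    (hd : d ^ 2 = -4 * α ^ 3 - 27 * β ^ 2) :
    α ≠ 0 ∧ 3 * α.valuation ≤ 2 * β.valuation + 3 := by
  have h27 : (-27 * β ^ 2).valuation = 3 + 2 * β.valuation := by
    rw [valuation_mul (by norm_num) (pow_ne_zero 2 hβ),
      show (-27 : ℚ_[3]) = -3 ^ 3 by norm_num, valuation_neg]
    simp
  by_contra h
  have hlt : -4 * α ^ 3 ≠ 0 → (-27 * β ^ 2).valuation < (-4 * α ^ 3).valuation := by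
    intro h4
    have hα : α ≠ 0 := by rintro rfl; simp at h4
    rw [h27, valuation_mul (by norm_num) (pow_ne_zero 3 hα), valuation_neg]
    simp only [not_and, not_le] at h
    simpa [padicValNat.eq_zero_of_not_dvd, add_comm] using h hα
  obtain ⟨-, hval⟩ := valuation_add_of_lt (mul_ne_zero (by norm_num) (pow_ne_zero 2 hβ)) hlt
  rw [show -27 * β ^ 2 + -4 * α ^ 3 = d ^ 2 by rw [hd]; ring, h27, valuation_pow] at hval
  omega

end Padic

section TotallyRamified

-- `Int.fract ∘ v` takes the values `0`, `1/3`, `2/3` on the summands of `c₀ + c₁ x + c₂ x²`.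
variable {K L : Type*} [Field K] [Field L] [Algebra K L] {v : L → ℚ} (hv : IsAddVal v)
  (hK : ∀ c : K, c ≠ 0 → ∃ n : ℤ, v (algebraMap K L c) = n) {x : L} (hx0 : x ≠ 0)
  (hx : v x = 1 / 3)
include hv hK hx0 hx

theorem fract_v_algebraMap_mul_pow {c : K} (hc : c ≠ 0) (i : ℕ) :
    Int.fract (v (algebraMap K L c * x ^ i)) = Int.fract ((i : ℚ) / 3) := by
  obtain ⟨n, hn⟩ := hK c hc
  rw [hv.map_mul _ _ ((map_ne_zero _).2 hc) (pow_ne_zero i hx0), hv.map_pow hx0, hn, hx,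
    Int.fract_intCast_add]
  ring_nf

theorem mul_add_mul_sq_ne_zero_and_fract_ne_zero {c₁ c₂ : K} (h : c₁ ≠ 0 ∨ c₂ ≠ 0) :
    algebraMap K L c₁ * x + algebraMap K L c₂ * x ^ 2 ≠ 0 ∧
      Int.fract (v (algebraMap K L c₁ * x + algebraMap K L c₂ * x ^ 2)) ≠ 0 := by
  have h₁ {c : K} (hc : c ≠ 0) : Int.fract (v (algebraMap K L c * x)) = 1 / 3 := by
    rw [← pow_one x, fract_v_algebraMap_mul_pow hv hK hx0 hx hc 1,
      Int.fract_eq_self.2 (by norm_num)]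
    norm_num
  have h₂ {c : K} (hc : c ≠ 0) : Int.fract (v (algebraMap K L c * x ^ 2)) = 2 / 3 := by
    rw [fract_v_algebraMap_mul_pow hv hK hx0 hx hc 2, Int.fract_eq_self.2 (by norm_num)]
    norm_num
  rcases eq_or_ne c₁ 0 with rfl | hc₁
  · have hc₂ := h.resolve_left (not_not.2 rfl)
    simp only [map_zero, zero_mul, zero_add]
    exact ⟨mul_ne_zero ((map_ne_zero _).2 hc₂) (pow_ne_zero 2 hx0), by rw [h₂ hc₂]; norm_num⟩
  rcases eq_or_ne c₂ 0 with rfl | hc₂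
  · simp only [map_zero, zero_mul, add_zero]
    exact ⟨mul_ne_zero ((map_ne_zero _).2 hc₁) hx0, by rw [h₁ hc₁]; norm_num⟩
  have hne : v (algebraMap K L c₁ * x) ≠ v (algebraMap K L c₂ * x ^ 2) := fun heq => by
    have := congrArg Int.fract heq
    rw [h₁ hc₁, h₂ hc₂] at this
    norm_num at this
  obtain ⟨hsum, hmin⟩ := hv.map_add_of_ne (mul_ne_zero ((map_ne_zero _).2 hc₁) hx0)
    (mul_ne_zero ((map_ne_zero _).2 hc₂) (pow_ne_zero 2 hx0)) hne
  refine ⟨hsum, ?_⟩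
  rcases min_choice (v (algebraMap K L c₁ * x)) (v (algebraMap K L c₂ * x ^ 2)) with h | h <;>
    rw [hmin, h]
  · rw [h₁ hc₁]; norm_num
  · rw [h₂ hc₂]; norm_num

theorem algebraMap_add_mul_add_mul_sq_ne_zero {c₀ c₁ c₂ : K} (h : c₁ ≠ 0 ∨ c₂ ≠ 0) :
    algebraMap K L c₀ + (algebraMap K L c₁ * x + algebraMap K L c₂ * x ^ 2) ≠ 0 := by
  obtain ⟨hm, hfract⟩ := mul_add_mul_sq_ne_zero_and_fract_ne_zero hv hK hx0 hx h
  rcases eq_or_ne c₀ 0 with rfl | hc₀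
  · simpa using hm
  obtain ⟨n, hn⟩ := hK c₀ hc₀
  refine (hv.map_add_of_ne ((map_ne_zero _).2 hc₀) hm fun heq => hfract ?_).1
  rw [← heq, hn, Int.fract_intCast]

theorem linearIndependent_one_self_sq : LinearIndependent K ![(1 : L), x, x ^ 2] := by
  rw [Fintype.linearIndependent_iff]
  intro g hg
  simp only [Fin.sum_univ_three, Matrix.cons_val_zero, Matrix.cons_val_one, Matrix.cons_val_two,
    Matrix.head_cons, Matrix.tail_cons, Algebra.smul_def, mul_one, add_assoc] at hg
  have h₁₂ : g 1 = 0 ∧ g 2 = 0 := by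
    by_contra h
    exact algebraMap_add_mul_add_mul_sq_ne_zero hv hK hx0 hx (not_and_or.1 h) hg
  rw [h₁₂.1, h₁₂.2] at hg
  have h₀ : g 0 = 0 := by simpa using hg
  intro i
  fin_cases i <;> simp [h₀, h₁₂.1, h₁₂.2]

theorem exists_v_algebraMap_eq_lt_v_sub (hfin : Module.finrank K L = 3) {y : L}
    (hy : ∀ c : K, y ≠ algebraMap K L c) (hyv : ∃ n : ℤ, v y = n) :
    ∃ c : K, c ≠ 0 ∧ v (algebraMap K L c) = v y ∧ v y < v (y - algebraMap K L c) := by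
  have hspan := (linearIndependent_one_self_sq hv hK hx0 hx).span_eq_top_of_card_eq_finrank
    (by simp [hfin])
  obtain ⟨g, hg⟩ :=
    (Submodule.mem_span_range_iff_exists_fun K).1 (hspan ▸ Submodule.mem_top (x := y))
  simp only [Fin.sum_univ_three, Matrix.cons_val_zero, Matrix.cons_val_one, Matrix.cons_val_two,
    Matrix.head_cons, Matrix.tail_cons, Algebra.smul_def, mul_one, add_assoc] at hg
  have h₁₂ : g 1 ≠ 0 ∨ g 2 ≠ 0 := by
    by_contra h
    rw [not_or, not_not, not_not] at h
    exact hy (g 0) (by simp [← hg, h.1, h.2])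
  obtain ⟨hm, hfract⟩ := mul_add_mul_sq_ne_zero_and_fract_ne_zero hv hK hx0 hx h₁₂
  set m := algebraMap K L (g 1) * x + algebraMap K L (g 2) * x ^ 2
  obtain ⟨n, hn⟩ := hyv
  have hym : v y ≠ v m := fun h => hfract (by rw [← h, hn, Int.fract_intCast])
  have hg₀ : g 0 ≠ 0 := by
    rintro h₀
    exact hym (by rw [← hg, h₀, map_zero, zero_add])
  obtain ⟨n₀, hn₀⟩ := hK (g 0) hg₀
  obtain ⟨-, hmin⟩ := hv.map_add_of_ne ((map_ne_zero _).2 hg₀) hm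
    fun h => hfract (by rw [← h, hn₀, Int.fract_intCast])
  rw [hg] at hmin
  have hy₀ : v y = v (algebraMap K L (g 0)) := by
    rcases min_choice (v (algebraMap K L (g 0))) (v m) with h | h
    · rw [hmin, h]
    · exact absurd (hmin.trans h) hym
  refine ⟨g 0, hg₀, hy₀.symm, ?_⟩
  rw [← hg, add_sub_cancel_left, hg]
  exact lt_of_le_of_ne (hmin.trans_le (min_le_right _ _)) hym

end TotallyRamified

open Polynomial

theorem finrank_eq_natDegree_of_adjoin_eq_top {K L : Type*} [Field K] [Field L] [Algebra K L]
    {f : K[X]} (hirr : Irreducible f) (hmon : f.Monic) {θ : L} (hθ : aeval θ f = 0)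
    (hgen : IntermediateField.adjoin K {θ} = ⊤) : Module.finrank K L = f.natDegree := by
  rw [← IntermediateField.finrank_top', ← hgen, IntermediateField.adjoin.finrank ⟨f, hmon, hθ⟩,
    ← minpoly.eq_of_irreducible_of_monic hirr hθ hmon]

-- Mod 3 the derivative `3cX² + 1` is `1`, so every root mod 3 is simple.
theorem PadicInt.exists_root_of_norm_lt_one {c e y : ℤ_[3]} (h : ‖c * y ^ 3 + y + e‖ < 1) :
    ∃ z : ℤ_[3], c * z ^ 3 + z + e = 0 := by
  have h3 : ‖3 * c * y ^ 2‖ < 1 := by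
    rw [norm_mul, norm_mul]
    refine mul_lt_one_of_nonneg_of_lt_one_left (by positivity) ?_ (PadicInt.norm_le_one _)
    exact mul_lt_one_of_nonneg_of_lt_one_left (norm_nonneg _)
      ((PadicInt.norm_lt_one_iff_dvd 3).2 (by exact_mod_cast dvd_rfl)) (PadicInt.norm_le_one _)
  have hd : ‖3 * c * y ^ 2 + 1‖ = 1 := by
    rw [PadicInt.norm_add_eq_max_of_ne (by simpa using h3.ne)]
    simpa using h3.le
  obtain ⟨z, hz, -⟩ := hensels_lemma (F := C c * X ^ 3 + X + C e) (a := y) (by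
    simp only [map_add, map_mul, aeval_C, aeval_X_pow, aeval_X, derivative_mul,
      derivative_C, derivative_X_pow, derivative_X, zero_mul, zero_add, Algebra.algebraMap_self,
      RingHom.id_apply, map_one, add_zero]
    rw [show c * ((3 : ℕ) * y ^ (3 - 1)) + 1 = 3 * c * y ^ 2 + 1 by push_cast; ring, hd]
    simpa using h)
  exact ⟨z, by simpa using hz⟩

namespace Padic

-- Substituting `X = r Y` and dividing by `α r` gives `(r²/α) Y³ + Y + β/(α r)`, which is
-- integral and vanishes mod 3 at `Y = 1`.
theorem exists_cubic_root_of_valuation {α β r : ℚ_[3]} (hα : α ≠ 0) (hr : r ≠ 0)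
    (hr2 : α.valuation ≤ 2 * r.valuation)
    (hfr : α.valuation + r.valuation < (r ^ 3 + α * r + β).valuation) :
    ∃ z : ℚ_[3], z ^ 3 + α * z + β = 0 := by
  have hαr : α * r ≠ 0 := mul_ne_zero hα hr
  set c := r ^ 2 / α with hc
  set e := (r ^ 3 + α * r + β) / (α * r) with he
  have hc1 : ‖c‖ ≤ 1 := by
    rw [norm_le_one_iff_val_nonneg, hc, div_eq_mul_inv,
      valuation_mul (pow_ne_zero 2 hr) (inv_ne_zero hα), valuation_pow, valuation_inv]
    push_cast
    omega
  have he1 : ‖e‖ < 1 := by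
    rcases eq_or_ne (r ^ 3 + α * r + β) 0 with h0 | h0
    · simp [he, h0]
    apply norm_lt_one_of_valuation_pos
    rw [he, div_eq_mul_inv, valuation_mul h0 (inv_ne_zero hαr), valuation_inv,
      valuation_mul hα hr]
    omega
  have hb1 : ‖e - c - 1‖ ≤ 1 := by
    rw [show e - c - 1 = e + -c + -1 by ring]
    refine (nonarchimedean _ _).trans (max_le ((nonarchimedean _ _).trans (max_le he1.le ?_)) ?_)
    · simpa using hc1
    · simp
  obtain ⟨c', hc'⟩ : ∃ c' : ℤ_[3], (c' : ℚ_[3]) = c := ⟨⟨c, hc1⟩, rfl⟩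
  obtain ⟨b', hb'⟩ : ∃ b' : ℤ_[3], (b' : ℚ_[3]) = e - c - 1 := ⟨⟨_, hb1⟩, rfl⟩
  obtain ⟨z, hz⟩ := PadicInt.exists_root_of_norm_lt_one (c := c') (e := b') (y := 1)
    (by rw [PadicInt.norm_def]; push_cast; simpa [hc', hb'] using he1)
  refine ⟨r * z, ?_⟩
  have hz' := congrArg ((↑) : ℤ_[3] → ℚ_[3]) hz
  push_cast at hz'
  rw [hc', hb', he, hc] at hz'
  field_simp at hz'
  linear_combination hz'

theorem exists_cubic_root_of_three_mul_valuation_lt {α β : ℚ_[3]} (hα : α ≠ 0) (hβ : β ≠ 0)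
    (h : 3 * α.valuation < 2 * β.valuation) : ∃ z : ℚ_[3], z ^ 3 + α * z + β = 0 := by
  have hr : -β / α ≠ 0 := div_ne_zero (neg_ne_zero.2 hβ) hα
  have hvr : (-β / α).valuation = β.valuation - α.valuation := by
    rw [div_eq_mul_inv, valuation_mul (neg_ne_zero.2 hβ) (inv_ne_zero hα), valuation_neg,
      valuation_inv]
    ring
  refine exists_cubic_root_of_valuation hα hr (by omega) ?_
  rw [show (-β / α) ^ 3 + α * (-β / α) + β = (-β / α) ^ 3 by field_simp; ring, valuation_pow,
    hvr]
  push_cast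
  omega

theorem exists_cubic_root_of_ramified {L : Type*} [Field L] [Algebra ℚ_[3] L]
    (hfin : Module.finrank ℚ_[3] L = 3) {v : L → ℚ} (hv : IsAddVal v)
    (hext : ∀ c : ℚ_[3], c ≠ 0 → v (algebraMap ℚ_[3] L c) = c.valuation) {x : L} (hx0 : x ≠ 0)
    (hx : v x = 1 / 3) {α β : ℚ_[3]} (hα : α ≠ 0) (hβ : β ≠ 0) {κ : ℤ}
    (hαv : α.valuation = 2 * κ) (hβv : β.valuation = 3 * κ) {θ : L}
    (hθ : θ ^ 3 + algebraMap ℚ_[3] L α * θ + algebraMap ℚ_[3] L β = 0) :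
    ∃ z : ℚ_[3], z ^ 3 + α * z + β = 0 := by
  set φ := algebraMap ℚ_[3] L
  have hφf (z : ℚ_[3]) : φ (z ^ 3 + α * z + β) = φ z ^ 3 + φ α * φ z + φ β := by simp
  by_cases hθφ : ∃ c, θ = φ c
  · obtain ⟨c, rfl⟩ := hθφ
    exact ⟨c, φ.injective (by rw [hφf, hθ, map_zero])⟩
  simp only [not_exists] at hθφ
  have hAv : v (φ α) = 2 * κ := by rw [hext α hα, hαv]; push_cast; ring
  have hθv : v θ = κ := hv.map_eq_of_cubic_eq_zero ((map_ne_zero φ).2 hα) ((map_ne_zero φ).2 hβ)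
    hAv.ge (by rw [hext β hβ, hβv]; push_cast; ring) hθ
  obtain ⟨e, he, hev, hlt⟩ := exists_v_algebraMap_eq_lt_v_sub hv (fun c hc => ⟨_, hext c hc⟩)
    hx0 hx hfin hθφ ⟨κ, hθv⟩
  have hev' : e.valuation = κ := by exact_mod_cast (hext e he).symm.trans (hev.trans hθv)
  by_cases hfe : e ^ 3 + α * e + β = 0
  · exact ⟨e, hfe⟩
  have h3 : v (3 : L) = 1 := by
    rw [show (3 : L) = φ 3 from (map_ofNat φ 3).symm, hext 3 three_ne_zero]
    simp
  have hbound := hv.lt_map_cubic_of_lt_map_sub hθ hθv hAv (zero_le_one.trans h3.ge)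
    (hθv ▸ hlt) (by rw [← hφf]; exact (map_ne_zero φ).2 hfe)
  rw [← hφf, hext _ hfe] at hbound
  have : 3 * κ < (e ^ 3 + α * e + β).valuation := by exact_mod_cast hbound
  exact exists_cubic_root_of_valuation hα he (by omega) (by omega)

end Padic

/-- If the irreducible depressed cubic `x³ + αx + β` over `ℚ₃` has square discriminant
`Δ = -4α³ - 27β²`, generates a totally ramified extension, and `v₃(β) ≡ 0 (mod 3)`,
then `v₃(α) = (2/3)v₃(β) + 1`. -/
theorem stmt_11 (α β : ℚ_[3])
    (hirr : Irreducible (X ^ 3 + C α * X + C β : Polynomial ℚ_[3]))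
    (hsq : ∃ d : ℚ_[3], d ^ 2 = -4 * α ^ 3 - 27 * β ^ 2)
    (L : Type) [Field L] [Algebra ℚ_[3] L]
    (θ : L) (hroot : Polynomial.aeval θ (X ^ 3 + C α * X + C β : Polynomial ℚ_[3]) = 0)
    (hgen : IntermediateField.adjoin ℚ_[3] {θ} = ⊤)
    (v : L → ℚ)
    (hmul : ∀ x y : L, x ≠ 0 → y ≠ 0 → v (x * y) = v x + v y)
    (hadd : ∀ x y : L, x ≠ 0 → y ≠ 0 → x + y ≠ 0 → min (v x) (v y) ≤ v (x + y))
    (hext : ∀ x : ℚ_[3], x ≠ 0 → v (algebraMap ℚ_[3] L x) = (x.valuation : ℚ))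
    (htot : ∃ x : L, x ≠ 0 ∧ v x = 1 / 3)
    (hβ : (3 : ℤ) ∣ β.valuation) :
    α ≠ 0 ∧ 3 * α.valuation = 2 * β.valuation + 3 := by
  have hdeg : (X ^ 3 + C α * X + C β).natDegree = 3 := by compute_degree!
  have hno (z : ℚ_[3]) : z ^ 3 + α * z + β ≠ 0 := fun hz =>
    hirr.not_isRoot_of_natDegree_ne_one (by rw [hdeg]; norm_num) (by simpa using hz)
  have hβ0 : β ≠ 0 := fun h => hno 0 (by simp [h])
  obtain ⟨d, hd⟩ := hsq
  obtain ⟨hα, hle⟩ := Padic.valuation_le_of_sq_eq_discr hβ0 hd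
  obtain ⟨κ, hκ⟩ := hβ
  refine ⟨hα, ?_⟩
  rcases lt_trichotomy (3 * α.valuation) (2 * β.valuation) with hlt | heq | hgt
  · obtain ⟨z, hz⟩ := Padic.exists_cubic_root_of_three_mul_valuation_lt hα hβ0 hlt
    exact absurd hz (hno z)
  · obtain ⟨x, hx0, hx⟩ := htot
    have hfin := finrank_eq_natDegree_of_adjoin_eq_top hirr (by monicity!) hroot hgen
    obtain ⟨z, hz⟩ := Padic.exists_cubic_root_of_ramified (hfin.trans hdeg) ⟨hmul, hadd⟩ hext
      hx0 hx hα hβ0 (by omega) hκ (by simpa using hroot)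
    exact absurd hz (hno z)
  · omega
end
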